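/- For every m ≥ 0, every subset A ⊆ V_m, and all x, y ∈ A with x ∼_m y, one has (5/3)^m ≤ c^A_{x,y} ≤ c^{\{x,y\}}_{x,y} ≤ 4·(5/3)^m, where c^{\{x,y\}}_{x,y} is the conductance for the two-point set {x,y} (i.e. the reciprocal 1/R(x,y) of the effective resistance between x and y). -/

import Mathlib

/-!
The trace `Q_A` of the level-`m` energy on `A` is nonnegative, `2`-homogeneous and satisfies the
parallelogram law, so it is a quadratic form; since competitors can be shifted by constants and
truncated by `max`, its coefficients give `Q_A(v) = ½ ∑ c^A_{st} (v s - v t)²` with `c^A_{st} ≥ 0`.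
Hence `Q_A(v) ≥ c^A_{xy}` whenever `v x = 1`, `v y = 0`, and minimising over such `v` gives
`c^A_{xy} ≤ c^{x,y}_{xy}`. For the lower bound, competitors `a` for `𝟙_x` and `b` for `𝟙_y` pay
`2·(5/3)^m` on the edge `xy`, which `max a b` and `min a b` do not pay. For the upper bound, `𝟙_x`
itself has energy `(5/3)^m · deg x`, and `deg x ≤ 4` because, in lattice coordinates, no vertex
is a corner of three cells.
-/

open scoped BigOperators

noncomputable section

namespace SGPaper

/-- The three corners of the Sierpinski gasket:
`q₀ = (1/2, √3/2)`, `q₁ = (0,0)`, `q₂ = (1,0)`. -/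
def q : Fin 3 → ℝ × ℝ
  | 0 => (1 / 2, Real.sqrt 3 / 2)
  | 1 => (0, 0)
  | 2 => (1, 0)

/-- The contraction map towards corner `i`: `F_i(x) = (x + q_i)/2`. -/
def Fmap (i : Fin 3) (x : ℝ × ℝ) : ℝ × ℝ := (2⁻¹ : ℝ) • (x + q i)

/-- `Fword w = F_{w₁} ∘ ⋯ ∘ F_{w_m}` for the word `w = w₁⋯w_m`. -/
def Fword (w : List (Fin 3)) : ℝ × ℝ → ℝ × ℝ :=
  w.foldr (fun i f => Fmap i ∘ f) id

/-- The level-`m` vertex set of the Sierpinski gasket: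
`V_m = ⋃_{|w| = m} F_w({q₀, q₁, q₂})`. -/
def V (m : ℕ) : Set (ℝ × ℝ) :=
  {x | ∃ w : List (Fin 3), w.length = m ∧ ∃ i : Fin 3, x = Fword w (q i)}

/-- `x` and `y` are `m`-neighbors: they are distinct and belong to a common
level-`m` cell `F_w({q₀, q₁, q₂})`. -/
def Nbr (m : ℕ) (x y : ℝ × ℝ) : Prop :=
  x ≠ y ∧ ∃ w : List (Fin 3), w.length = m ∧
    (∃ i : Fin 3, x = Fword w (q i)) ∧ (∃ j : Fin 3, y = Fword w (q j))

/-- The value `(u x - u y)²` on the unordered pair `{x, y}`. -/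
def edgeVal (u : ℝ × ℝ → ℝ) : Sym2 (ℝ × ℝ) → ℝ :=
  Sym2.lift ⟨fun x y => (u x - u y) ^ 2, fun _ _ => by ring⟩

/-- The unordered pair `e` is an edge of the level-`m` graph `Γ_m`. -/
def IsEdge (m : ℕ) (e : Sym2 (ℝ × ℝ)) : Prop :=
  ∃ x y : ℝ × ℝ, Nbr m x y ∧ e = s(x, y)

/-- The level-`m` graph energy: `E_m(u) = (5/3)^m Σ (u x − u y)²`, the sum being over
unordered `m`-neighbor pairs `{x, y}` (a finite set, so `tsum` is the honest sum). -/
def Energy (m : ℕ) (u : ℝ × ℝ → ℝ) : ℝ :=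
  (5 / 3 : ℝ) ^ m * ∑' e : {e : Sym2 (ℝ × ℝ) // IsEdge m e}, edgeVal u e

/-- `Q_E(v)`: minimal level-`m` energy among functions `u : V_m → ℝ` agreeing
with `v` on `E` (the minimum is attained, so it equals this infimum). -/
def Q (m : ℕ) (E : Set (ℝ × ℝ)) (v : ℝ × ℝ → ℝ) : ℝ :=
  sInf {r | ∃ u : ℝ × ℝ → ℝ, (∀ x ∈ E, u x = v x) ∧ r = Energy m u}

/-- Indicator function of the point `z`. -/
def ind (z : ℝ × ℝ) : ℝ × ℝ → ℝ := fun t => if t = z then 1 else 0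

/-- The conductance `c^E_{x,y} = (Q_E(𝟙_x) + Q_E(𝟙_y) − Q_E(𝟙_x + 𝟙_y))/2`
between `x, y ∈ E`, computed at level `m`. -/
def cond (m : ℕ) (E : Set (ℝ × ℝ)) (x y : ℝ × ℝ) : ℝ :=
  (Q m E (ind x) + Q m E (ind y) - Q m E (ind x + ind y)) / 2
end SGPaper

section Parallelogram

open QuadraticMap

variable {M : Type*} [AddCommGroup M] {q : M → ℝ}

theorem polar_add_left_of_parallelogram
    (hpar : ∀ x y, q (x + y) + q (x - y) = 2 * q x + 2 * q y) (x x' y : M) :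
    polar q (x + x') y = polar q x y + polar q x' y := by
  have h₁ := hpar (x + y) (x' + y)
  have h₂ := hpar (x + x' + y) y
  have h₃ := hpar x x'
  rw [show x + y + (x' + y) = x + x' + y + y by abel, show x + y - (x' + y) = x - x' by abel] at h₁
  rw [add_sub_cancel_right] at h₂
  simp only [polar]
  linarith

/-- Nonnegativity replaces the continuity hypothesis of the Jordan–von Neumann theorem: it bounds
`a ↦ polar q (a • x) y` near `0`, and a locally bounded additive map `ℝ → ℝ` is linear. -/
theorem polar_smul_left_of_nonneg [Module ℝ M] (hnonneg : ∀ x, 0 ≤ q x)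
    (hsmul : ∀ (a : ℝ) x, q (a • x) = a ^ 2 * q x)
    (hpar : ∀ x y, q (x + y) + q (x - y) = 2 * q x + 2 * q y) (a : ℝ) (x y : M) :
    polar q (a • x) y = a * polar q x y := by
  have hadd := polar_add_left_of_parallelogram hpar
  let θ : ℝ →+ ℝ := AddMonoidHom.mk' (fun a => polar q (a • x) y) fun a b => by
    simp only [add_smul, hadd]
  have hθ_bound : ∀ b ∈ Metric.ball (0 : ℝ) 1, |θ b| ≤ q x + q y := by
    intro b hb
    have hb2 : b ^ 2 ≤ 1 := by
      rw [mem_ball_zero_iff, Real.norm_eq_abs] at hb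
      nlinarith [abs_nonneg b, sq_abs b]
    have hneg : θ (-b) = -θ b := map_neg θ b
    have hlow : ∀ c, -(c ^ 2 * q x + q y) ≤ θ c := fun c => by
      change _ ≤ q (c • x + y) - q (c • x) - q y
      rw [hsmul]
      linarith [hnonneg (c • x + y)]
    have h₁ := hlow b
    have h₂ := hlow (-b)
    rw [hneg, neg_sq] at h₂
    rw [abs_le]
    constructor <;> nlinarith [hnonneg x]
  have hcont : Continuous θ := θ.continuous_of_isBounded_nhds_zero (Metric.ball_mem_nhds 0 one_pos)
    ((Metric.isBounded_iff_subset_closedBall 0).2 ⟨q x + q y, by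
      rintro _ ⟨b, hb, rfl⟩
      simpa [Real.dist_eq] using hθ_bound b hb⟩)
  simpa [θ] using map_real_smul θ hcont a 1

noncomputable def QuadraticMap.ofParallelogram [Module ℝ M] (q : M → ℝ) (hnonneg : ∀ x, 0 ≤ q x)
    (hsmul : ∀ (a : ℝ) x, q (a • x) = a ^ 2 * q x)
    (hpar : ∀ x y, q (x + y) + q (x - y) = 2 * q x + 2 * q y) : QuadraticMap ℝ M ℝ :=
  QuadraticMap.ofPolar q (fun a x => by rw [hsmul, smul_eq_mul, pow_two])
    (polar_add_left_of_parallelogram hpar) (polar_smul_left_of_nonneg hnonneg hsmul hpar)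

end Parallelogram

theorem Finset.sum_sum_mul_sub_sq_of_sum_eq_zero {ι : Type*} (s : Finset ι) (P : ι → ι → ℝ)
    (hsymm : ∀ i j, P i j = P j i) (hrow : ∀ i ∈ s, ∑ j ∈ s, P i j = 0) (v : ι → ℝ) :
    ∑ i ∈ s, ∑ j ∈ s, P i j * (v i - v j) ^ 2 = -2 * ∑ i ∈ s, ∑ j ∈ s, P i j * v i * v j := by
  have hrow' : ∀ i ∈ s, ∑ j ∈ s, P i j * v i ^ 2 = 0 := fun i hi => by
    rw [← Finset.sum_mul, hrow i hi, zero_mul]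
  have hcol : ∑ i ∈ s, ∑ j ∈ s, P i j * v j ^ 2 = 0 := by
    rw [Finset.sum_comm]
    exact Finset.sum_eq_zero fun j hj => by simpa only [hsymm _ j] using hrow' j hj
  have hexp : ∀ i j, P i j * (v i - v j) ^ 2 =
      P i j * v i ^ 2 + P i j * v j ^ 2 - 2 * (P i j * v i * v j) := fun i j => by ring
  simp only [hexp, Finset.sum_sub_distrib, Finset.sum_add_distrib, ← Finset.mul_sum,
    Finset.sum_eq_zero hrow', hcol]
  ring

namespace SGPaper

/- Level-`m` vertices are `2⁻ᵐ • latticePt t` for points `t` of the triangular lattice `ℕ × ℕ`;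
the cell of a word `w` has its lower-left corner at `cellBase w`. -/

def latticePt (t : ℕ × ℕ) : ℝ × ℝ :=
  ((t.1 : ℝ) + (t.2 : ℝ) / 2, (t.2 : ℝ) * (Real.sqrt 3 / 2))

theorem latticePt_add (s t : ℕ × ℕ) : latticePt (s + t) = latticePt s + latticePt t := by
  ext <;> simp only [latticePt, Prod.fst_add, Prod.snd_add, Nat.cast_add] <;> ring

theorem latticePt_nsmul (n : ℕ) (t : ℕ × ℕ) : latticePt (n • t) = (n : ℝ) • latticePt t := by
  ext <;> simp only [latticePt, Prod.smul_fst, Prod.smul_snd, smul_eq_mul, Nat.cast_mul] <;> ring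

theorem latticePt_injective : Function.Injective latticePt := by
  rintro ⟨a, b⟩ ⟨c, d⟩ h
  have hsqrt : Real.sqrt 3 / 2 ≠ 0 := by positivity
  simp only [latticePt, Prod.mk.injEq] at h
  have hbd : (b : ℝ) = d := mul_right_cancel₀ hsqrt h.2
  have hac : (a : ℝ) = c := by linarith [h.1]
  rw [Nat.cast_inj] at hbd hac
  rw [hac, hbd]

def vertex (m : ℕ) (t : ℕ × ℕ) : ℝ × ℝ := ((2 : ℝ) ^ m)⁻¹ • latticePt t

theorem vertex_injective (m : ℕ) : Function.Injective (vertex m) :=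
  (smul_right_injective _ (by positivity)).comp latticePt_injective

def cornerOffset : Fin 3 → ℕ × ℕ
  | 0 => (0, 1)
  | 1 => (0, 0)
  | 2 => (1, 0)

theorem q_eq_latticePt (i : Fin 3) : q i = latticePt (cornerOffset i) := by
  fin_cases i <;> simp [q, cornerOffset, latticePt]

def cellBase : List (Fin 3) → ℕ × ℕ
  | [] => (0, 0)
  | i :: w => 2 ^ w.length • cornerOffset i + cellBase w

theorem Fword_q (w : List (Fin 3)) (i : Fin 3) :
    Fword w (q i) = vertex w.length (cellBase w + cornerOffset i) := by
  induction w with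
  | nil => simp [Fword, vertex, cellBase, q_eq_latticePt, Prod.zero_eq_mk.symm]
  | cons j w ih =>
    change Fmap j (Fword w (q i)) = _
    rw [ih, Fmap, q_eq_latticePt]
    simp only [vertex, cellBase, List.length_cons, latticePt_add, latticePt_nsmul, Nat.cast_pow,
      Nat.cast_ofNat]
    match_scalars <;> field_simp <;> ring

def cellBases : ℕ → Finset (ℕ × ℕ)
  | 0 => {(0, 0)}
  | m + 1 => Finset.univ.biUnion fun i => (cellBases m).image (2 ^ m • cornerOffset i + ·)

theorem mem_cellBases {m : ℕ} {t : ℕ × ℕ} :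
    t ∈ cellBases m ↔ ∃ w : List (Fin 3), w.length = m ∧ cellBase w = t := by
  induction m generalizing t with
  | zero =>
    simp only [cellBases, Finset.mem_singleton]
    exact ⟨fun h => ⟨[], rfl, h.symm⟩, fun ⟨w, hw, h⟩ => by
      rw [List.length_eq_zero_iff.1 hw] at h; exact h.symm⟩
  | succ m ih =>
    simp only [cellBases, Finset.mem_biUnion, Finset.mem_image, Finset.mem_univ, true_and, ih]
    constructor
    · rintro ⟨i, _, ⟨w, hw, rfl⟩, rfl⟩
      exact ⟨i :: w, by simp [hw], by simp [cellBase, hw]⟩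
    · rintro ⟨_ | ⟨i, w⟩, hw, rfl⟩
      · simp at hw
      · simp only [List.length_cons, Nat.add_right_cancel_iff] at hw
        exact ⟨i, _, ⟨w, hw, rfl⟩, by simp [cellBase, hw]⟩

theorem mem_cellBases_succ {m a b : ℕ} :
    (a, b) ∈ cellBases (m + 1) ↔ ∃ c d, (c, d) ∈ cellBases m ∧
      (a = c ∧ b = d + 2 ^ m ∨ a = c ∧ b = d ∨ a = c + 2 ^ m ∧ b = d) := by
  simp only [cellBases, Finset.mem_biUnion, Finset.mem_image, Finset.mem_univ, true_and,
    Fin.exists_fin_succ, Fin.exists_fin_zero, Prod.exists, cornerOffset, Fin.succ_zero_eq_one,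
    Fin.succ_one_eq_two, zero_add, or_false, Prod.smul_mk, smul_eq_mul, mul_one, mul_zero,
    Prod.mk_add_mk, Prod.mk.injEq]
  constructor
  · rintro (⟨c, d, h, rfl, rfl⟩ | ⟨c, d, h, rfl, rfl⟩ | ⟨c, d, h, rfl, rfl⟩)
    · exact ⟨c, d, h, .inl ⟨rfl, by ring⟩⟩
    · exact ⟨c, d, h, .inr (.inl ⟨rfl, rfl⟩)⟩
    · exact ⟨c, d, h, .inr (.inr ⟨by ring, rfl⟩)⟩
  · rintro ⟨c, d, h, ⟨rfl, rfl⟩ | ⟨rfl, rfl⟩ | ⟨rfl, rfl⟩⟩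
    · exact .inl ⟨_, _, h, rfl, by ring⟩
    · exact .inr (.inl ⟨_, _, h, rfl, rfl⟩)
    · exact .inr (.inr ⟨_, _, h, by ring, rfl⟩)

theorem add_lt_of_mem_cellBases {m a b : ℕ} (h : (a, b) ∈ cellBases m) : a + b < 2 ^ m := by
  induction m generalizing a b with
  | zero => simp_all [cellBases]
  | succ m ih =>
    obtain ⟨c, d, hcd, h | h | h⟩ := mem_cellBases_succ.1 h <;> have := ih hcd <;> omega

/-- The combinatorial heart of the degree bound: no lattice point is a corner of three cells. -/
theorem not_three_cellBases {m a b c d e f : ℕ} (h₁ : (a, b) ∈ cellBases m)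
    (h₂ : (c, d) ∈ cellBases m) (h₃ : (e, f) ∈ cellBases m) (hac : a = c + 1) (hbd : b = d)
    (hae : a = e) (hbf : b = f + 1) : False := by
  induction m generalizing a b c d e f with
  | zero => simp_all [cellBases]
  | succ m ih =>
    obtain ⟨a', b', h₁', hab⟩ := mem_cellBases_succ.1 h₁
    obtain ⟨c', d', h₂', hcd⟩ := mem_cellBases_succ.1 h₂
    obtain ⟨e', f', h₃', hef⟩ := mem_cellBases_succ.1 h₃
    have := add_lt_of_mem_cellBases h₁'
    have := add_lt_of_mem_cellBases h₂'
    have := add_lt_of_mem_cellBases h₃'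
    rcases hab with hab | hab | hab <;> rcases hcd with hcd | hcd | hcd <;>
      rcases hef with hef | hef | hef <;>
      first
      | omega
      | exact ih h₁' h₂' h₃' (by omega) (by omega) (by omega) (by omega)

theorem exists_cornerOffset_ne (m : ℕ) (p : ℕ × ℕ) :
    ∃ i, ∀ b ∈ cellBases m, b + cornerOffset i ≠ p := by
  by_contra! h
  obtain ⟨⟨a, b⟩, h₁, e₁⟩ := h 1
  obtain ⟨⟨c, d⟩, h₂, e₂⟩ := h 2
  obtain ⟨⟨e, f⟩, h₃, e₃⟩ := h 0
  simp only [cornerOffset, Prod.ext_iff, Prod.fst_add, Prod.snd_add] at e₁ e₂ e₃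
  exact not_three_cellBases h₁ h₂ h₃ (by omega) (by omega) (by omega) (by omega)

/-- The level-`m` cells having the lattice point `p` as a corner, each recorded as its base point
together with the index of that corner. -/
def cellsAt (m : ℕ) (p : ℕ × ℕ) : Finset ((ℕ × ℕ) × Fin 3) :=
  (cellBases m ×ˢ Finset.univ).filter fun c => c.1 + cornerOffset c.2 = p

theorem card_cellsAt_le (m : ℕ) (p : ℕ × ℕ) : (cellsAt m p).card ≤ 2 := by
  obtain ⟨i, hi⟩ := exists_cornerOffset_ne m p
  calc (cellsAt m p).card ≤ (Finset.univ.erase i).card := by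
        refine Finset.card_le_card_of_injOn Prod.snd (fun c hc => ?_) fun c hc c' hc' h => ?_
        · rw [Finset.mem_coe, cellsAt, Finset.mem_filter, Finset.mem_product] at hc
          exact Finset.mem_erase.2 ⟨fun h => hi c.1 hc.1.1 (h ▸ hc.2), Finset.mem_univ _⟩
        · rw [Finset.mem_coe, cellsAt, Finset.mem_filter] at hc hc'
          have : c.1 = c'.1 := add_right_cancel (h ▸ hc.2.trans hc'.2.symm)
          exact Prod.ext this h
    _ = 2 := by simp

def edgeFinset (m : ℕ) : Finset (Sym2 (ℝ × ℝ)) :=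
  ((cellBases m ×ˢ (Finset.univ : Finset (Fin 3 × Fin 3))).image fun c =>
    s(vertex m (c.1 + cornerOffset c.2.1), vertex m (c.1 + cornerOffset c.2.2))).filter
    fun e => ¬e.IsDiag

theorem isEdge_iff_mem_edgeFinset {m : ℕ} {e : Sym2 (ℝ × ℝ)} : IsEdge m e ↔ e ∈ edgeFinset m := by
  simp only [edgeFinset, Finset.mem_filter, Finset.mem_image, Finset.mem_product, Finset.mem_univ,
    and_true, mem_cellBases]
  constructor
  · rintro ⟨x, y, ⟨hxy, w, hw, ⟨i, rfl⟩, ⟨j, rfl⟩⟩, rfl⟩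
    exact ⟨⟨⟨_, i, j⟩, ⟨w, hw, rfl⟩, by rw [Fword_q, Fword_q, hw]⟩, by simpa using hxy⟩
  · rintro ⟨⟨⟨_, i, j⟩, ⟨w, hw, rfl⟩, rfl⟩, hdiag⟩
    rw [Sym2.mk_isDiag_iff] at hdiag
    exact ⟨_, _, ⟨hdiag, w, hw, ⟨i, by rw [Fword_q, hw]⟩, ⟨j, by rw [Fword_q, hw]⟩⟩, rfl⟩

theorem Energy_eq_sum (m : ℕ) (u : ℝ × ℝ → ℝ) :
    Energy m u = (5 / 3 : ℝ) ^ m * ∑ e ∈ edgeFinset m, edgeVal u e := by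
  have hset : {e | IsEdge m e} = (edgeFinset m : Set (Sym2 (ℝ × ℝ))) :=
    Set.ext fun _ => isEdge_iff_mem_edgeFinset
  exact congrArg _ ((tsum_congr_set_coe (edgeVal u) hset).trans (Finset.tsum_subtype _ _))

theorem edgeVal_ind_le_one (x : ℝ × ℝ) (e : Sym2 (ℝ × ℝ)) : edgeVal (ind x) e ≤ 1 := by
  induction e using Sym2.ind with
  | _ a b => simp only [edgeVal, ind, Sym2.lift_mk]; split_ifs <;> norm_num

/-- Every level-`m` vertex has at most four neighbours: it is a corner of at most two cells. -/
theorem sum_edgeVal_ind_vertex_le (m : ℕ) (p : ℕ × ℕ) :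
    ∑ e ∈ edgeFinset m, edgeVal (ind (vertex m p)) e ≤ 4 := by
  set x := vertex m p
  set star := (cellsAt m p).biUnion fun c =>
    (Finset.univ.erase c.2).image fun j => s(x, vertex m (c.1 + cornerOffset j))
  have hsupp : ∀ e ∈ edgeFinset m, edgeVal (ind x) e ≠ 0 → e ∈ star := by
    simp only [edgeFinset, Finset.mem_filter, Finset.mem_image, Finset.mem_product,
      Finset.mem_univ, and_true]
    rintro _ ⟨⟨⟨b, i, j⟩, hb, rfl⟩, hdiag⟩ hne
    have hmem : ∀ i j, vertex m (b + cornerOffset i) = x → i ≠ j →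
        s(x, vertex m (b + cornerOffset j)) ∈ star := fun i j hi hij =>
      Finset.mem_biUnion.2 ⟨(b, i), Finset.mem_filter.2 ⟨Finset.mem_product.2 ⟨hb,
        Finset.mem_univ _⟩, vertex_injective m hi⟩, Finset.mem_image.2 ⟨j,
        Finset.mem_erase.2 ⟨hij.symm, Finset.mem_univ _⟩, rfl⟩⟩
    have hij : i ≠ j := fun h => hdiag (by simp [h])
    by_cases hi : vertex m (b + cornerOffset i) = x
    · simpa [hi] using hmem i j hi hij
    by_cases hj : vertex m (b + cornerOffset j) = x
    · simpa [hj, Sym2.eq_swap] using hmem j i hj hij.symm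
    exact absurd (by simp [edgeVal, ind, hi, hj]) hne
  have hcard : star.card ≤ 4 := calc
    star.card ≤ ∑ c ∈ cellsAt m p, ((Finset.univ.erase c.2).image
        fun j => s(x, vertex m (c.1 + cornerOffset j))).card := Finset.card_biUnion_le
    _ ≤ ∑ c ∈ cellsAt m p, 2 := Finset.sum_le_sum fun c _ =>
        Finset.card_image_le.trans (by simp)
    _ ≤ 4 := by rw [Finset.sum_const, smul_eq_mul]; linarith [card_cellsAt_le m p]
  calc ∑ e ∈ edgeFinset m, edgeVal (ind x) e
      = ∑ e ∈ (edgeFinset m).filter (· ∈ star), edgeVal (ind x) e :=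
        (Finset.sum_filter_of_ne hsupp).symm
    _ ≤ ((edgeFinset m).filter (· ∈ star)).card • 1 :=
        Finset.sum_le_card_nsmul _ _ _ fun e _ => edgeVal_ind_le_one x e
    _ ≤ 4 := by
        rw [nsmul_eq_mul, mul_one]
        exact_mod_cast (Finset.card_le_card fun e he => (Finset.mem_filter.1 he).2).trans hcard

theorem V_finite (m : ℕ) : (V m).Finite := by
  refine (((List.finite_length_eq (Fin 3) m).prod Set.finite_univ).image
    fun wi => Fword wi.1 (q wi.2)).subset ?_
  rintro _ ⟨w, hw, i, rfl⟩
  exact ⟨(w, i), ⟨hw, Set.mem_univ _⟩, rfl⟩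

section Energy

variable (m : ℕ)

@[simp] theorem edgeVal_mk (u : ℝ × ℝ → ℝ) (a b : ℝ × ℝ) : edgeVal u s(a, b) = (u a - u b) ^ 2 :=
  rfl

theorem edgeVal_nonneg (u : ℝ × ℝ → ℝ) (e : Sym2 (ℝ × ℝ)) : 0 ≤ edgeVal u e := by
  induction e using Sym2.ind with
  | _ a b => exact sq_nonneg _

theorem edgeVal_sup_add_inf_le (a b : ℝ × ℝ → ℝ) (e : Sym2 (ℝ × ℝ)) :
    edgeVal (a ⊔ b) e + edgeVal (a ⊓ b) e ≤ edgeVal a e + edgeVal b e := by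
  induction e using Sym2.ind with
  | _ s t =>
    simp only [edgeVal_mk, Pi.sup_apply, Pi.inf_apply]
    rcases le_total (a s) (b s) with h₁ | h₁ <;> rcases le_total (a t) (b t) with h₂ | h₂ <;>
      simp only [sup_of_le_left, sup_of_le_right, inf_of_le_left, inf_of_le_right, h₁, h₂] <;>
      nlinarith

theorem Energy_nonneg (u : ℝ × ℝ → ℝ) : 0 ≤ Energy m u := by
  rw [Energy_eq_sum]
  exact mul_nonneg (by positivity) (Finset.sum_nonneg fun e _ => edgeVal_nonneg u e)

theorem Energy_smul (a : ℝ) (u : ℝ × ℝ → ℝ) : Energy m (a • u) = a ^ 2 * Energy m u := by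
  simp only [Energy_eq_sum, Finset.mul_sum]
  refine Finset.sum_congr rfl fun e _ => ?_
  induction e using Sym2.ind with
  | _ s t => simp only [edgeVal_mk, Pi.smul_apply, smul_eq_mul]; ring

theorem Energy_add_const (u : ℝ × ℝ → ℝ) (c : ℝ) :
    Energy m (fun t => u t + c) = Energy m u := by
  simp only [Energy_eq_sum]
  congr 1
  refine Finset.sum_congr rfl fun e _ => ?_
  induction e using Sym2.ind with
  | _ s t => simp only [edgeVal_mk, add_sub_add_right_eq_sub]

theorem Energy_const (c : ℝ) : Energy m (fun _ => c) = 0 := by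
  calc Energy m (fun _ => c) = Energy m 0 := by simpa using Energy_add_const m 0 c
    _ = 0 := by simpa using Energy_smul m 0 0

theorem Energy_add_add_Energy_sub (u w : ℝ × ℝ → ℝ) :
    Energy m (u + w) + Energy m (u - w) = 2 * Energy m u + 2 * Energy m w := by
  simp only [Energy_eq_sum, Finset.mul_sum, ← mul_add, ← Finset.sum_add_distrib]
  refine Finset.sum_congr rfl fun e _ => ?_
  induction e using Sym2.ind with
  | _ s t => simp only [edgeVal_mk, Pi.add_apply, Pi.sub_apply]; ring

theorem Energy_sup_add_Energy_inf_le (a b : ℝ × ℝ → ℝ) :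
    Energy m (a ⊔ b) + Energy m (a ⊓ b) ≤ Energy m a + Energy m b := by
  simp only [Energy_eq_sum, ← mul_add, ← Finset.sum_add_distrib]
  exact mul_le_mul_of_nonneg_left
    (Finset.sum_le_sum fun e _ => edgeVal_sup_add_inf_le a b e) (by positivity)

theorem Energy_sup_add_Energy_inf_add_le {e : Sym2 (ℝ × ℝ)} (he : e ∈ edgeFinset m)
    (a b : ℝ × ℝ → ℝ) :
    Energy m (a ⊔ b) + Energy m (a ⊓ b) +
        (5 / 3 : ℝ) ^ m * (edgeVal a e + edgeVal b e - edgeVal (a ⊔ b) e - edgeVal (a ⊓ b) e) ≤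
      Energy m a + Energy m b := by
  have hdefect := Finset.single_le_sum (f := fun e =>
      edgeVal a e + edgeVal b e - edgeVal (a ⊔ b) e - edgeVal (a ⊓ b) e)
    (fun e _ => by linarith [edgeVal_sup_add_inf_le a b e]) he
  simp only [Finset.sum_sub_distrib, Finset.sum_add_distrib] at hdefect
  simp only [Energy_eq_sum]
  nlinarith [pow_pos (by norm_num : (0 : ℝ) < 5 / 3) m]

end Energy

section Trace

open QuadraticMap

variable {m : ℕ} {E : Set (ℝ × ℝ)}

theorem Q_le_Energy {u v : ℝ × ℝ → ℝ} (h : Set.EqOn u v E) : Q m E v ≤ Energy m u :=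
  csInf_le ⟨0, by rintro _ ⟨u, _, rfl⟩; exact Energy_nonneg m u⟩ ⟨u, h, rfl⟩

theorem le_Q {r : ℝ} {v : ℝ × ℝ → ℝ} (h : ∀ u, Set.EqOn u v E → r ≤ Energy m u) :
    r ≤ Q m E v :=
  le_csInf ⟨_, v, fun _ _ => rfl, rfl⟩ fun _ ⟨u, hu, hr⟩ => hr ▸ h u hu

theorem Q_nonneg (v : ℝ × ℝ → ℝ) : 0 ≤ Q m E v :=
  le_Q fun u _ => Energy_nonneg m u

theorem le_Q_add_Q {r : ℝ} {f g : ℝ × ℝ → ℝ}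
    (h : ∀ a b, Set.EqOn a f E → Set.EqOn b g E → r ≤ Energy m a + Energy m b) :
    r ≤ Q m E f + Q m E g := by
  have : r - Q m E f ≤ Q m E g := le_Q fun b hb => by
    have : r - Energy m b ≤ Q m E f := le_Q fun a ha => by linarith [h a b ha hb]
    linarith
  linarith

theorem Q_congr {v v' : ℝ × ℝ → ℝ} (h : Set.EqOn v v' E) : Q m E v = Q m E v' :=
  le_antisymm (le_Q fun _ hu => Q_le_Energy (hu.trans h.symm))
    (le_Q fun _ hu => Q_le_Energy (hu.trans h))

theorem Q_const (c : ℝ) : Q m E (fun _ => c) = 0 :=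
  le_antisymm ((Q_le_Energy (Set.eqOn_refl _ _)).trans_eq (Energy_const m c)) (Q_nonneg _)

theorem Q_add_const (v : ℝ × ℝ → ℝ) (c : ℝ) : Q m E (fun t => v t + c) = Q m E v := by
  refine le_antisymm (le_Q fun u hu => ?_) (le_Q fun u hu => ?_)
  · rw [← Energy_add_const m u c]
    exact Q_le_Energy fun t ht => by simp [hu ht]
  · have := Q_le_Energy (m := m) (fun t ht => by simp [hu ht] : Set.EqOn (fun t => u t + -c) v E)
    rwa [Energy_add_const] at this

theorem Q_smul_le (a : ℝ) (v : ℝ × ℝ → ℝ) : Q m E (a • v) ≤ a ^ 2 * Q m E v := by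
  rcases eq_or_ne a 0 with rfl | ha
  · rw [zero_smul, zero_pow two_ne_zero, zero_mul]
    exact (Q_const 0).le
  have ha2 : 0 < a ^ 2 := by positivity
  rw [← div_le_iff₀' ha2]
  refine le_Q fun u hu => (div_le_iff₀' ha2).2 ?_
  rw [← Energy_smul]
  exact Q_le_Energy fun t ht => by simp [hu ht]

theorem Q_smul (a : ℝ) (v : ℝ × ℝ → ℝ) : Q m E (a • v) = a ^ 2 * Q m E v := by
  refine le_antisymm (Q_smul_le a v) ?_
  rcases eq_or_ne a 0 with rfl | ha
  · simpa using Q_nonneg _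
  calc a ^ 2 * Q m E v = a ^ 2 * Q m E (a⁻¹ • a • v) := by rw [inv_smul_smul₀ ha]
    _ ≤ a ^ 2 * ((a⁻¹) ^ 2 * Q m E (a • v)) := by gcongr; exact Q_smul_le _ _
    _ = Q m E (a • v) := by field_simp

theorem Q_add_add_Q_sub (f g : ℝ × ℝ → ℝ) :
    Q m E (f + g) + Q m E (f - g) = 2 * Q m E f + 2 * Q m E g := by
  have hle : ∀ f g : ℝ × ℝ → ℝ, Q m E (f + g) + Q m E (f - g) ≤ 2 * Q m E f + 2 * Q m E g := by
    intro f g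
    suffices (Q m E (f + g) + Q m E (f - g)) / 2 ≤ Q m E f + Q m E g by linarith
    refine le_Q_add_Q fun a b ha hb => ?_
    have hadd : Set.EqOn (a + b) (f + g) E := fun t ht => by simp [ha ht, hb ht]
    have hsub : Set.EqOn (a - b) (f - g) E := fun t ht => by simp [ha ht, hb ht]
    linarith [Q_le_Energy (m := m) hadd, Q_le_Energy (m := m) hsub, Energy_add_add_Energy_sub m a b]
  refine le_antisymm (hle f g) ?_
  have := hle (f + g) (f - g)
  rw [add_add_sub_cancel, add_sub_sub_cancel, ← two_smul ℝ f, ← two_smul ℝ g, Q_smul,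
    Q_smul] at this
  linarith

variable (m E) in
noncomputable def traceForm : QuadraticMap ℝ (ℝ × ℝ → ℝ) ℝ :=
  .ofParallelogram (Q m E) Q_nonneg Q_smul Q_add_add_Q_sub

theorem traceForm_apply (v : ℝ × ℝ → ℝ) : traceForm m E v = Q m E v := rfl

end Trace

section Conductance

open QuadraticMap

variable {m : ℕ} {E : Set (ℝ × ℝ)}

theorem cond_comm (x y : ℝ × ℝ) : cond m E x y = cond m E y x := by
  rw [cond, cond, add_comm (ind y)]
  ring

theorem cond_eq_neg_polar (x y : ℝ × ℝ) :
    cond m E x y = -polar (traceForm m E) (ind x) (ind y) / 2 := by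
  simp only [cond, polar, traceForm_apply]
  ring

theorem ind_sup_ind {x y : ℝ × ℝ} (h : x ≠ y) : ind x ⊔ ind y = ind x + ind y := by
  ext t
  by_cases hx : t = x <;> by_cases hy : t = y <;> simp_all [ind]

/-- Markov property: `max a b` of competitors `a` for `𝟙_x` and `b` for `𝟙_y` competes for
`𝟙_x + 𝟙_y`. -/
theorem cond_nonneg {x y : ℝ × ℝ} (hxy : x ≠ y) : 0 ≤ cond m E x y := by
  have : Q m E (ind x + ind y) ≤ Q m E (ind x) + Q m E (ind y) := le_Q_add_Q fun a b ha hb => by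
    have hsup : Set.EqOn (a ⊔ b) (ind x + ind y) E := fun t ht => by
      rw [← ind_sup_ind hxy, Pi.sup_apply, Pi.sup_apply, ha ht, hb ht]
    linarith [Q_le_Energy (m := m) hsup, Energy_sup_add_Energy_inf_le m a b,
      Energy_nonneg m (a ⊓ b)]
  rw [cond]
  linarith

theorem Q_eq_sum_cond (S : Finset (ℝ × ℝ)) (v : ℝ × ℝ → ℝ) :
    Q m S v = 1 / 2 * ∑ s ∈ S, ∑ t ∈ S, cond m S s t * (v s - v t) ^ 2 := by
  set B := polar (traceForm m S)
  have hv : Set.EqOn v (∑ s ∈ S, v s • ind s) S := fun p hp => by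
    simp [Finset.sum_apply, ind, Finset.mem_coe.1 hp]
  have hexpand : B (∑ s ∈ S, v s • ind s) (∑ t ∈ S, v t • ind t) =
      ∑ s ∈ S, ∑ t ∈ S, B (ind s) (ind t) * v s * v t := by
    simp only [B, ← polarBilin_apply_apply, map_sum, map_smul, LinearMap.sum_apply,
      LinearMap.smul_apply, smul_eq_mul, Finset.mul_sum]
    exact Finset.sum_congr rfl fun s _ => Finset.sum_congr rfl fun t _ => by
      rw [polarBilin_apply_apply, polarBilin_apply_apply, polar_comm]
      ring
  have hrow : ∀ s ∈ S, ∑ t ∈ S, B (ind s) (ind t) = 0 := fun s _ => by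
    have hone : Set.EqOn (∑ t ∈ S, ind t) (fun _ => 1) S := fun p hp => by
      simp [Finset.sum_apply, ind, Finset.mem_coe.1 hp]
    have hshift : Set.EqOn (ind s + ∑ t ∈ S, ind t) (fun p => ind s p + 1) S := fun p hp => by
      simp [hone hp]
    calc ∑ t ∈ S, B (ind s) (ind t) = polarBilin (traceForm m S) (ind s) (∑ t ∈ S, ind t) := by
          simp [B, map_sum, polarBilin_apply_apply]
      _ = 0 := by
          rw [polarBilin_apply_apply, polar, traceForm_apply, traceForm_apply, traceForm_apply,
            Q_congr hshift, Q_add_const, Q_congr hone, Q_const, sub_zero, sub_self]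
  have hsum := Finset.sum_sum_mul_sub_sq_of_sum_eq_zero S (fun s t => B (ind s) (ind t))
    (fun s t => polar_comm _ _ _) hrow v
  have hself := polar_self (traceForm m S) (∑ s ∈ S, v s • ind s)
  have hcond : ∑ s ∈ S, ∑ t ∈ S, cond m S s t * (v s - v t) ^ 2 =
      -(1 / 2) * ∑ s ∈ S, ∑ t ∈ S, B (ind s) (ind t) * (v s - v t) ^ 2 := by
    simp only [cond_eq_neg_polar, Finset.mul_sum]
    exact Finset.sum_congr rfl fun s _ => Finset.sum_congr rfl fun t _ => by ring
  rw [Q_congr hv, ← traceForm_apply, hcond]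
  rw [nsmul_eq_mul, Nat.cast_ofNat] at hself
  linarith

theorem cond_le_Q {S : Finset (ℝ × ℝ)} {x y : ℝ × ℝ} (hx : x ∈ S) (hy : y ∈ S) (hxy : x ≠ y)
    {v : ℝ × ℝ → ℝ} (hvx : v x = 1) (hvy : v y = 0) : cond m S x y ≤ Q m S v := by
  set f := fun s t => cond m S s t * (v s - v t) ^ 2
  have hf : ∀ s t, 0 ≤ f s t := fun s t => by
    rcases eq_or_ne s t with rfl | hst
    · simp [f]
    · exact mul_nonneg (cond_nonneg hst) (sq_nonneg _)
  have hpair : f x y + f y x ≤ ∑ s ∈ S, ∑ t ∈ S, f s t := calc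
    f x y + f y x ≤ ∑ t ∈ S, f x t + ∑ t ∈ S, f y t := add_le_add
        (Finset.single_le_sum (fun t _ => hf x t) hy) (Finset.single_le_sum (fun t _ => hf y t) hx)
    _ = ∑ s ∈ {x, y}, ∑ t ∈ S, f s t := (Finset.sum_pair (f := fun s => ∑ t ∈ S, f s t) hxy).symm
    _ ≤ ∑ s ∈ S, ∑ t ∈ S, f s t := Finset.sum_le_sum_of_subset_of_nonneg
        (Finset.insert_subset hx (Finset.singleton_subset_iff.2 hy))
        fun s _ _ => Finset.sum_nonneg fun t _ => hf s t
  have hxy' : f x y + f y x = 2 * cond m S x y := by simp [f, hvx, hvy, cond_comm y x]; ring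
  rw [Q_eq_sum_cond]
  linarith

theorem Q_pair_ind_add_ind {x y : ℝ × ℝ} (hxy : x ≠ y) : Q m {x, y} (ind x + ind y) = 0 := by
  rw [Q_congr (v' := fun _ => 1), Q_const]
  rintro p (rfl | rfl) <;> simp [ind, hxy, hxy.symm]

theorem cond_pair {x y : ℝ × ℝ} (hxy : x ≠ y) :
    cond m {x, y} x y = (Q m {x, y} (ind x) + Q m {x, y} (ind y)) / 2 := by
  rw [cond, Q_pair_ind_add_ind hxy, sub_zero]

theorem cond_le_Q_pair_ind {S : Finset (ℝ × ℝ)} {x y : ℝ × ℝ} (hx : x ∈ S) (hy : y ∈ S)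
    (hxy : x ≠ y) : cond m S x y ≤ Q m {x, y} (ind x) :=
  le_Q fun u hu => (cond_le_Q hx hy hxy (by simpa [ind] using hu (Set.mem_insert x {y}))
    (by simpa [ind, hxy.symm] using hu (Set.mem_insert_of_mem x rfl))).trans
    (Q_le_Energy (Set.eqOn_refl _ _))

theorem cond_le_cond_pair {S : Finset (ℝ × ℝ)} {x y : ℝ × ℝ} (hx : x ∈ S) (hy : y ∈ S)
    (hxy : x ≠ y) : cond m S x y ≤ cond m {x, y} x y := by
  have h₁ := cond_le_Q_pair_ind (m := m) hx hy hxy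
  have h₂ := cond_le_Q_pair_ind (m := m) hy hx hxy.symm
  rw [Set.pair_comm, cond_comm] at h₂
  rw [cond_pair hxy]
  linarith

theorem pow_le_cond {x y : ℝ × ℝ} (hx : x ∈ E) (hy : y ∈ E) (hnb : Nbr m x y) :
    (5 / 3 : ℝ) ^ m ≤ cond m E x y := by
  have hxy := hnb.1
  have he : s(x, y) ∈ edgeFinset m := isEdge_iff_mem_edgeFinset.1 ⟨x, y, hnb, rfl⟩
  have : Q m E (ind x + ind y) + 2 * (5 / 3 : ℝ) ^ m ≤ Q m E (ind x) + Q m E (ind y) :=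
    le_Q_add_Q fun a b ha hb => by
      have hsup : Set.EqOn (a ⊔ b) (ind x + ind y) E := fun t ht => by
        rw [← ind_sup_ind hxy, Pi.sup_apply, Pi.sup_apply, ha ht, hb ht]
      have hdefect := Energy_sup_add_Energy_inf_add_le m he a b
      simp only [edgeVal_mk, Pi.sup_apply, Pi.inf_apply, ha hx, ha hy, hb hx, hb hy, ind,
        if_pos, if_neg hxy, if_neg hxy.symm] at hdefect
      norm_num at hdefect
      linarith [Q_le_Energy (m := m) hsup, Energy_nonneg m (a ⊓ b)]
  rw [cond]
  linarith

theorem Q_ind_le {x : ℝ × ℝ} (hx : x ∈ V m) : Q m E (ind x) ≤ 4 * (5 / 3 : ℝ) ^ m := by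
  obtain ⟨w, hw, i, rfl⟩ := hx
  refine (Q_le_Energy (Set.eqOn_refl _ _)).trans ?_
  rw [Energy_eq_sum, Fword_q, hw, mul_comm]
  exact mul_le_mul_of_nonneg_right (sum_edgeVal_ind_vertex_le _ _) (by positivity)

theorem cond_pair_le {x y : ℝ × ℝ} (hnb : Nbr m x y) : cond m {x, y} x y ≤ 4 * (5 / 3 : ℝ) ^ m := by
  obtain ⟨hxy, w, hw, ⟨i, hx⟩, ⟨j, hy⟩⟩ := hnb
  rw [cond_pair hxy]
  linarith [Q_ind_le (E := {x, y}) ⟨w, hw, i, hx⟩, Q_ind_le (E := {x, y}) ⟨w, hw, j, hy⟩]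

end Conductance

/-- For `A ⊆ V_m` and `m`-neighbors `x, y ∈ A`:
`(5/3)^m ≤ c^A_{x,y} ≤ c^{{x,y}}_{x,y} ≤ 4·(5/3)^m`, where `c^{{x,y}}_{x,y}` is the
conductance of the two-point set `{x, y}` (the reciprocal of the effective resistance). -/
theorem stmt2 (m : ℕ) (A : Set (ℝ × ℝ)) (hA : A ⊆ V m)
    (x y : ℝ × ℝ) (hx : x ∈ A) (hy : y ∈ A) (hnb : Nbr m x y) :
    (5 / 3 : ℝ) ^ m ≤ cond m A x y ∧
    cond m A x y ≤ cond m {x, y} x y ∧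
    cond m {x, y} x y ≤ 4 * (5 / 3 : ℝ) ^ m := by
  refine ⟨pow_le_cond hx hy hnb, ?_, cond_pair_le hnb⟩
  obtain ⟨S, rfl⟩ := ((V_finite m).subset hA).exists_finset_coe
  exact cond_le_cond_pair hx hy hnb.1

end SGPaper
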